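/- arXiv:math/9311201 — 2 statements merged into one kernel-verified Lean document; each statement's English description precedes it below -/
import Mathlib

section
/- Let G be a group generated by a finite symmetric set S with word metric d. For every word w = a_1⋯a_n in S of length n ≥ 4 representing the identity, the partial products g_i = a_1⋯a_i admit a diagonal triangulation (of the n-cycle labeled g_1,...,g_n) in which every chord joining points labeled g_i and g_j satisfies d(g_i, g_j) ≤ ⌈n/3⌉. -/
/-- The word metric on `G` with respect to a generating set `S`. -/
noncomputable def wordDist {G : Type*} [Group G] (S : Set G) (g h : G) : ℕ :=
  sInf {k : ℕ | ∃ l : List G, l.length = k ∧ (∀ x ∈ l, x ∈ S) ∧ l.prod = g⁻¹ * h}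

/-- `e` is a chord of the circle with distinguished points `p_1, ..., p_n`:
its endpoints are distinct non-adjacent (cyclically) points, written smaller index first. -/
def IsChord (n : ℕ) (e : ℕ × ℕ) : Prop :=
  1 ≤ e.1 ∧ e.1 < e.2 ∧ e.2 ≤ n ∧ 2 ≤ e.2 - e.1 ∧ e.2 - e.1 ≤ n - 2

/-- Two chords cross in the interior of the circle iff their endpoints interleave. -/
def Crosses (e f : ℕ × ℕ) : Prop :=
  (e.1 < f.1 ∧ f.1 < e.2 ∧ e.2 < f.2) ∨ (f.1 < e.1 ∧ e.1 < f.2 ∧ f.2 < e.2)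

/-- A diagonal triangulation of the circle with `n` distinguished points: `n - 3` pairwise
non-crossing chords; these divide the disk into triangles with every boundary arc a side
of a triangle. -/
def IsTriangulation (n : ℕ) (T : Finset (ℕ × ℕ)) : Prop :=
  (∀ e ∈ T, IsChord n e) ∧ (∀ e ∈ T, ∀ f ∈ T, ¬ Crosses e f) ∧ T.card = n - 3

lemma wordDist_le' {G : Type*} [Group G] (S : Set G) (g h : G) (l : List G)
    (h1 : ∀ x ∈ l, x ∈ S) (h2 : l.prod = g⁻¹ * h) : wordDist S g h ≤ l.length :=
  Nat.sInf_le ⟨l, rfl, h1, h2⟩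

lemma seg_prod {G : Type*} [Group G] (a g : ℕ → G) (hg : ∀ i, g (i + 1) = g i * a (i + 1)) :
    ∀ (d i : ℕ), ((List.range d).map (fun k => a (i + 1 + k))).prod = (g i)⁻¹ * g (i + d) := by
  intro d
  induction d with
  | zero => simp
  | succ d ih =>
    intro i
    rw [List.range_succ, List.map_append, List.prod_append]
    have h1 : i + 1 + d = i + d + 1 := by omega
    have h2 : i + (d + 1) = i + d + 1 := by omega
    simp [ih i, h1, h2, hg (i + d), mul_assoc]

lemma wd_forward {G : Type*} [Group G] (S : Finset G) (n : ℕ)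
    (a : ℕ → G) (ha : ∀ i, 1 ≤ i → i ≤ n → a i ∈ S)
    (g : ℕ → G) (hg : ∀ i, g (i + 1) = g i * a (i + 1))
    (i j : ℕ) (hij : i ≤ j) (hjn : j ≤ n) :
    wordDist (S : Set G) (g i) (g j) ≤ j - i := by
  have := wordDist_le' (S : Set G) (g i) (g j)
      ((List.range (j - i)).map (fun k => a (i + 1 + k)))
      (by
        intro x hx
        simp only [List.mem_map, List.mem_range] at hx
        obtain ⟨k, hk, rfl⟩ := hx
        exact ha _ (by omega) (by omega))
      (by rw [seg_prod a g hg (j - i) i]; congr 1; congr 1; omega)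
  simpa using this

lemma wd_backward {G : Type*} [Group G] (S : Finset G)
    (hsymm : ∀ s ∈ S, s⁻¹ ∈ S) (n : ℕ)
    (a : ℕ → G) (ha : ∀ i, 1 ≤ i → i ≤ n → a i ∈ S)
    (g : ℕ → G) (hg0 : g 0 = 1) (hg : ∀ i, g (i + 1) = g i * a (i + 1)) (hid : g n = 1)
    (i j : ℕ) (hij : i ≤ j) (hjn : j ≤ n) :
    wordDist (S : Set G) (g i) (g j) ≤ n - j + i := by
  set l0 : List G := ((List.range (n - j)).map (fun k => a (j + 1 + k))) ++
      ((List.range i).map (fun k => a (0 + 1 + k))) with hl0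
  have hprod0 : l0.prod = (g j)⁻¹ * g i := by
    rw [hl0, List.prod_append, seg_prod a g hg (n - j) j, seg_prod a g hg i 0]
    have : j + (n - j) = n := by omega
    rw [this, hid, hg0]
    group
  have hmem0 : ∀ x ∈ l0, x ∈ S := by
    intro x hx
    rw [hl0] at hx
    simp only [List.mem_append, List.mem_map, List.mem_range] at hx
    rcases hx with ⟨k, hk, rfl⟩ | ⟨k, hk, rfl⟩
    · exact ha _ (by omega) (by omega)
    · exact ha _ (by omega) (by omega)
  have := wordDist_le' (S : Set G) (g i) (g j) ((l0.map (·⁻¹)).reverse)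
      (by
        intro x hx
        simp only [List.mem_reverse, List.mem_map] at hx
        obtain ⟨y, hy, rfl⟩ := hx
        exact hsymm y (hmem0 y hy))
      (by rw [(List.prod_inv_reverse l0).symm, hprod0]; group)
  simp only [hl0] at this; simp at this; omega

/-- Every word `a 1 ⋯ a n` (`n ≥ 4`) in the symmetric generating set `S` representing the
identity admits a diagonal triangulation of its `n`-cycle (points `p_i` labeled by the
partial products `g i = a 1 ⋯ a i`) all of whose chords have word-metric length at
most `⌈n/3⌉`. -/
theorem stmt_3 {G : Type*} [Group G] (S : Finset G)
    (hsymm : ∀ s ∈ S, s⁻¹ ∈ S) (hgen : Subgroup.closure (S : Set G) = ⊤)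
    (n : ℕ) (hn : 4 ≤ n) (a : ℕ → G) (ha : ∀ i, 1 ≤ i → i ≤ n → a i ∈ S)
    (g : ℕ → G) (hg0 : g 0 = 1) (hg : ∀ i, g (i + 1) = g i * a (i + 1))
    (hid : g n = 1) :
    ∃ T : Finset (ℕ × ℕ), IsTriangulation n T ∧
      ∀ e ∈ T, wordDist (S : Set G) (g e.1) (g e.2) ≤ (n + 2) / 3 := by
  classical
  set m := (n + 2) / 3 with hm
  set b := (n - m + 1) / 2 with hb
  set c := n - m - b with hc
  set q := 1 + m with hq
  set r := 1 + m + b with hr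
  have hfacts : 2 ≤ m ∧ 1 ≤ b ∧ b ≤ m ∧ 1 ≤ c ∧ c ≤ b ∧ m + b + c = n := by
    constructor
    · omega
    constructor
    · omega
    constructor
    · omega
    constructor
    · omega
    constructor
    · omega
    · omega
  obtain ⟨h2m, h1b, hbm, h1c, hcb, hsum⟩ := hfacts
  set I1 : Finset ℕ := Finset.Ico 3 (q + 1) ∪ (if 2 ≤ c then {r} else ∅) with hI1
  set I2 : Finset ℕ := Finset.Ico (q + 2) (r + 1) with hI2
  set I3 : Finset ℕ := Finset.Ico (r + 2) (n + 1) with hI3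
  set T : Finset (ℕ × ℕ) := I1.image (Prod.mk 1) ∪ I2.image (Prod.mk q) ∪ I3.image (Prod.mk r)
    with hT
  have hmemT : ∀ e : ℕ × ℕ, e ∈ T →
      (e.1 = 1 ∧ 3 ≤ e.2 ∧ e.2 ≤ q) ∨ (e.1 = 1 ∧ e.2 = r ∧ 2 ≤ c) ∨
      (e.1 = q ∧ q + 2 ≤ e.2 ∧ e.2 ≤ r) ∨ (e.1 = r ∧ r + 2 ≤ e.2 ∧ e.2 ≤ n) := by
    intro e he
    rw [hT] at he
    simp only [Finset.mem_union, Finset.mem_image, hI1, hI2, hI3, Finset.mem_Ico] at he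
    rcases he with (⟨y, hy, rfl⟩ | ⟨y, hy, rfl⟩) | ⟨y, hy, rfl⟩
    · rcases hy with hy | hy
      · exact Or.inl ⟨rfl, by omega, by omega⟩
      · split_ifs at hy with h2c
        · simp only [Finset.mem_singleton] at hy
          exact Or.inr (Or.inl ⟨rfl, by omega, h2c⟩)
        · simp at hy
    · exact Or.inr (Or.inr (Or.inl ⟨rfl, by omega, by omega⟩))
    · exact Or.inr (Or.inr (Or.inr ⟨rfl, by omega, by omega⟩))
  refine ⟨T, ⟨?_, ?_, ?_⟩, ?_⟩
  · -- chords
    intro e he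
    rcases hmemT e he with h | h | h | h <;>
      exact ⟨by omega, by omega, by omega, by omega, by omega⟩
  · -- non-crossing
    intro e he f hf
    rcases hmemT e he with h | h | h | h <;> rcases hmemT f hf with h' | h' | h' | h' <;>
      · rintro (⟨h1, h2, h3⟩ | ⟨h1, h2, h3⟩) <;> omega
  · -- cardinality
    have hinj : ∀ x : ℕ, Function.Injective (Prod.mk x : ℕ → ℕ × ℕ) := by
      intro x y y' h
      simpa using h
    have hd12 : Disjoint (I1.image (Prod.mk 1)) (I2.image (Prod.mk q)) := by
      simp only [Finset.disjoint_left, Finset.mem_image]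
      rintro e ⟨y, _, rfl⟩ ⟨y', _, h⟩
      simp only [Prod.mk.injEq] at h
      omega
    have hd3 : Disjoint (I1.image (Prod.mk 1) ∪ I2.image (Prod.mk q)) (I3.image (Prod.mk r)) := by
      simp only [Finset.disjoint_left, Finset.mem_union, Finset.mem_image]
      rintro e (⟨y, _, rfl⟩ | ⟨y, _, rfl⟩) ⟨y', _, h⟩ <;>
        · simp only [Prod.mk.injEq] at h
          omega
    rw [hT, Finset.card_union_of_disjoint hd3, Finset.card_union_of_disjoint hd12,
      Finset.card_image_of_injective _ (hinj 1), Finset.card_image_of_injective _ (hinj q),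
      Finset.card_image_of_injective _ (hinj r), hI1, hI2, hI3]
    have hr1 : Disjoint (Finset.Ico 3 (q + 1)) (if 2 ≤ c then ({r} : Finset ℕ) else ∅) := by
      split_ifs
      · simp only [Finset.disjoint_singleton_right, Finset.mem_Ico]
        omega
      · simp
    rw [Finset.card_union_of_disjoint hr1, Nat.card_Ico, Nat.card_Ico, Nat.card_Ico]
    split_ifs with h2c <;> simp <;> omega
  · -- distances
    intro e he
    rcases hmemT e he with ⟨h1, h2, h3⟩ | ⟨h1, h2, h3⟩ | ⟨h1, h2, h3⟩ | ⟨h1, h2, h3⟩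
    · exact le_trans (wd_forward S n a ha g hg e.1 e.2 (by omega) (by omega)) (by omega)
    · exact le_trans (wd_backward S hsymm n a ha g hg0 hg hid e.1 e.2 (by omega) (by omega))
        (by omega)
    · exact le_trans (wd_forward S n a ha g hg e.1 e.2 (by omega) (by omega)) (by omega)
    · exact le_trans (wd_forward S n a ha g hg e.1 e.2 (by omega) (by omega)) (by omega)
end

section
/- Every word w = a_1⋯a_n of length n ≥ 4 in a symmetric alphabet admits the following explicit diagonal triangulation of its n-cycle with distinguished points p_1,...,p_n: chords from p_n to p_i for 2 ≤ i ≤ ⌈n/3⌉, from p_{⌈n/3⌉} to p_i for ⌈n/3⌉+2 ≤ i ≤ 2⌈n/3⌉, and from p_{2⌈n/3⌉} to p_i for 2⌈n/3⌉+2 ≤ i ≤ n; these chords are pairwise non-crossing and divide the disk into triangles, and every chord joins two points whose indices differ (cyclically) by at most ⌈n/3⌉. -/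
/-- The explicit chord set of Theorem A: with `m = ⌈n/3⌉`, chords from `p_n` to `p_i` for
`2 ≤ i ≤ m`, from `p_m` to `p_i` for `m + 2 ≤ i ≤ 2m`, and from `p_{2m}` to `p_i` for
`2m + 2 ≤ i ≤ n` (each chord recorded with smaller index first). -/
def fanChords (n : ℕ) : Finset (ℕ × ℕ) :=
  ((Finset.Icc 2 ((n + 2) / 3)).image fun i => (i, n)) ∪
    ((Finset.Icc ((n + 2) / 3 + 2) (2 * ((n + 2) / 3))).image fun i => ((n + 2) / 3, i)) ∪
    ((Finset.Icc (2 * ((n + 2) / 3) + 2) n).image fun i => (2 * ((n + 2) / 3), i))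

lemma mem_fanChords {n : ℕ} {e : ℕ × ℕ} :
    e ∈ fanChords n ↔
      (2 ≤ e.1 ∧ e.1 ≤ (n+2)/3 ∧ e.2 = n) ∨
      (e.1 = (n+2)/3 ∧ (n+2)/3 + 2 ≤ e.2 ∧ e.2 ≤ 2*((n+2)/3)) ∨
      (e.1 = 2*((n+2)/3) ∧ 2*((n+2)/3) + 2 ≤ e.2 ∧ e.2 ≤ n) := by
  simp only [fanChords, Finset.mem_union, Finset.mem_image, Finset.mem_Icc, Prod.ext_iff]
  constructor
  · rintro ((⟨i, ⟨h1, h2⟩, h3, h4⟩ | ⟨i, ⟨h1, h2⟩, h3, h4⟩) | ⟨i, ⟨h1, h2⟩, h3, h4⟩) <;> omega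
  · rintro (⟨h1, h2, h3⟩ | ⟨h1, h2, h3⟩ | ⟨h1, h2, h3⟩)
    · exact Or.inl (Or.inl ⟨e.1, ⟨h1, h2⟩, rfl, h3.symm⟩)
    · exact Or.inl (Or.inr ⟨e.2, ⟨h2, h3⟩, h1.symm, rfl⟩)
    · exact Or.inr ⟨e.2, ⟨h2, h3⟩, h1.symm, rfl⟩


/-- For any word `w` of length `n ≥ 4` in a symmetric alphabet, the explicit chords
`fanChords n` are genuine chords of the `n`-cycle of `w`, pairwise non-crossing, and
`n - 3` in number (hence they divide the disk into triangles, every boundary arc being a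
side of a triangle); moreover every chord joins two points whose indices differ
cyclically by at most `⌈n/3⌉`. -/
theorem stmt_16 {α : Type*} (inv : α → α) (hinv : Function.Involutive inv)
    (w : List α) (n : ℕ) (hlen : w.length = n) (hn : 4 ≤ n) :
    (∀ e ∈ fanChords n, IsChord n e) ∧
    (∀ e ∈ fanChords n, ∀ f ∈ fanChords n, ¬ Crosses e f) ∧
    (fanChords n).card = n - 3 ∧
    (∀ e ∈ fanChords n, min (e.2 - e.1) (n - (e.2 - e.1)) ≤ (n + 2) / 3) := by
  set m := (n + 2) / 3 with hm
  have hm1 : n ≤ 3 * m := by omega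
  have hm2 : 3 * m ≤ n + 2 := by omega
  refine ⟨?_, ?_, ?_, ?_⟩
  · intro e he
    rcases mem_fanChords.mp he with h | h | h <;>
      simp only [IsChord] <;> omega
  · intro e he f hf hc
    rcases mem_fanChords.mp he with h | h | h <;>
      rcases mem_fanChords.mp hf with h' | h' | h' <;>
      rcases hc with c | c <;> omega
  · rcases Nat.lt_or_ge n 5 with h5 | h5
    · interval_cases n
      · decide
    · have h2m : 2 * m < n := by omega
      rw [fanChords]
      rw [Finset.card_union_of_disjoint, Finset.card_union_of_disjoint]
      · rw [Finset.card_image_of_injective _ (fun a b h => (Prod.ext_iff.mp h).1),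
          Finset.card_image_of_injective _ (fun a b h => (Prod.ext_iff.mp h).2),
          Finset.card_image_of_injective _ (fun a b h => (Prod.ext_iff.mp h).2)]
        simp only [Nat.card_Icc]
        omega
      · rw [Finset.disjoint_left]
        rintro a ha hb
        simp only [Finset.mem_image, Finset.mem_Icc, Prod.ext_iff] at ha hb
        obtain ⟨i, hi, h1, h2⟩ := ha
        obtain ⟨j, hj, h3, h4⟩ := hb
        omega
      · rw [Finset.disjoint_left]
        rintro a ha hb
        simp only [Finset.mem_union, Finset.mem_image, Finset.mem_Icc, Prod.ext_iff] at ha hb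
        obtain ⟨j, hj, h3, h4⟩ := hb
        rcases ha with ⟨i, hi, h1, h2⟩ | ⟨i, hi, h1, h2⟩ <;> omega
  · intro e he
    rcases mem_fanChords.mp he with h | h | h <;> omega
end
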